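/- arXiv:1410.5704 — 2 statements merged into one kernel-verified Lean document; each statement's English description precedes it below -/
import Mathlib

section
/- If 0 < M < 1, then the matrix A_M = !![1, −2√M; 2√M, 1 − 4M] (the Jacobian matrix of H_M ∘ H_M at the 2-periodic point p₁) has two nonreal complex-conjugate eigenvalues e^{iφ} and e^{−iφ} of modulus 1, where φ ∈ (0, π) is determined by cos φ = 1 − 2M; that is, the 2-periodic orbit {p₁, p₂} of H_M is elliptic for all 0 < M < 1. -/
/-
The matrix has trace `2 - 4M` and determinant `1`, so its eigenvalues are the roots
of `z² - (2 - 4M) z + 1`. With `φ = arccos (1 - 2M) ∈ (0, π)` this polynomial is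
`z² - 2 cos φ z + 1 = (z - e^{iφ}) (z - e^{-iφ})`, and `sin φ > 0` makes these roots nonreal.
-/

open Complex

/-- `z` is an eigenvalue of the complex `2 × 2` matrix `A`. -/
def IsEigenvalueC (A : Matrix (Fin 2) (Fin 2) ℂ) (z : ℂ) : Prop :=
  ∃ v : Fin 2 → ℂ, v ≠ 0 ∧ A.mulVec v = z • v

/-- The Jacobian matrix of `H_M ∘ H_M` at the 2-periodic point `p₁ = (−√M, √M)`,
viewed as a complex matrix: `!![1, −2√M; 2√M, 1 − 4M]`. -/
noncomputable def henonNIterJac (M : ℝ) : Matrix (Fin 2) (Fin 2) ℂ :=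
  !![1, -2 * (Real.sqrt M : ℂ); 2 * (Real.sqrt M : ℂ), 1 - 4 * (M : ℂ)]

theorem isEigenvalueC_of_sq_sub_trace_mul_add_det {A : Matrix (Fin 2) (Fin 2) ℂ}
    (hA : A 0 1 ≠ 0) {z : ℂ} (hz : z ^ 2 - A.trace * z + A.det = 0) :
    IsEigenvalueC A z := by
  rw [Matrix.trace_fin_two, Matrix.det_fin_two] at hz
  refine ⟨![-A 0 1, A 0 0 - z], fun hv => hA (by simpa using congrFun hv 0), ?_⟩
  ext i
  fin_cases i
  · simp only [Matrix.mulVec, dotProduct, Fin.sum_univ_two, Fin.zero_eta, Matrix.cons_val_zero,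
      Matrix.cons_val_one, Matrix.cons_val_fin_one, Pi.smul_apply, smul_eq_mul]
    ring
  · simp only [Matrix.mulVec, dotProduct, Fin.sum_univ_two, Fin.mk_one, Matrix.cons_val_zero,
      Matrix.cons_val_one, Matrix.cons_val_fin_one, Pi.smul_apply, smul_eq_mul]
    linear_combination hz

theorem exp_mul_I_sq_sub_two_cos_mul_add_one (θ : ℂ) :
    exp (θ * I) ^ 2 - 2 * cos θ * exp (θ * I) + 1 = 0 := by
  have hprod : exp (θ * I) * exp (-θ * I) = 1 := by
    rw [← exp_add, neg_mul, add_neg_cancel, exp_zero]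
  rw [two_cos]
  linear_combination -hprod

theorem henonNIterJac_trace (M : ℝ) : (henonNIterJac M).trace = 2 - 4 * (M : ℂ) := by
  rw [henonNIterJac, Matrix.trace_fin_two_of]
  ring

theorem henonNIterJac_det {M : ℝ} (hM : 0 ≤ M) : (henonNIterJac M).det = 1 := by
  have hsq : (Real.sqrt M : ℂ) ^ 2 = M := by exact_mod_cast Real.sq_sqrt hM
  rw [henonNIterJac, Matrix.det_fin_two_of]
  linear_combination 4 * hsq

theorem henonNIterJac_isEigenvalueC_exp_mul_I {M : ℝ} (hM : 0 < M) {θ : ℂ}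
    (hθ : cos θ = 1 - 2 * M) : IsEigenvalueC (henonNIterJac M) (exp (θ * I)) := by
  have hb : henonNIterJac M 0 1 ≠ 0 := by
    simpa [henonNIterJac] using Real.sqrt_pos.mpr hM |>.ne'
  refine isEigenvalueC_of_sq_sub_trace_mul_add_det hb ?_
  rw [henonNIterJac_trace, henonNIterJac_det hM.le]
  linear_combination exp_mul_I_sq_sub_two_cos_mul_add_one θ + 2 * exp (θ * I) * hθ

/-- If `0 < M < 1`, the matrix `A_M = !![1, −2√M; 2√M, 1 − 4M]` has two nonreal
complex-conjugate eigenvalues `e^{iφ}` and `e^{−iφ}` of modulus `1`, where `φ ∈ (0, π)` is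
determined by `cos φ = 1 − 2M`; i.e. the 2-periodic orbit `{p₁, p₂}` of `H_M` is elliptic. -/
theorem henonN_two_periodic_orbit_elliptic {M : ℝ} (hM0 : 0 < M) (hM1 : M < 1) :
    ∃ φ : ℝ, φ ∈ Set.Ioo 0 Real.pi ∧ Real.cos φ = 1 - 2 * M ∧
      (Complex.exp (φ * I)).im ≠ 0 ∧
      ‖Complex.exp (φ * I)‖ = 1 ∧
      Complex.exp (-(φ : ℂ) * I) = (starRingEnd ℂ) (Complex.exp (φ * I)) ∧
      IsEigenvalueC (henonNIterJac M) (Complex.exp (φ * I)) ∧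
      IsEigenvalueC (henonNIterJac M) (Complex.exp (-(φ : ℂ) * I)) := by
  set φ := Real.arccos (1 - 2 * M)
  have hφ : φ ∈ Set.Ioo 0 Real.pi :=
    ⟨Real.arccos_pos.mpr (by linarith), Real.arccos_lt_pi.mpr (by linarith)⟩
  have hcos : Real.cos φ = 1 - 2 * M := Real.cos_arccos (by linarith) (by linarith)
  have hcosC : cos (φ : ℂ) = 1 - 2 * M := by exact_mod_cast hcos
  refine ⟨φ, hφ, hcos, ?_, norm_exp_ofReal_mul_I φ, ?_,
    henonNIterJac_isEigenvalueC_exp_mul_I hM0 hcosC,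
    henonNIterJac_isEigenvalueC_exp_mul_I hM0 ((cos_neg _).trans hcosC)⟩
  · rw [exp_ofReal_mul_I_im]
    exact (Real.sin_pos_of_pos_of_lt_pi hφ.1 hφ.2).ne'
  · rw [← exp_conj]
    simp
end

section
/- Let λ ∈ ℝ with 0 < |λ| < 1, let y⁻ > 0, d ≠ 0, s₀ ∈ ℝ, α ≠ 0, and C > 0, and let (ε_k) and (ρ_k) be real sequences with |ε_k| ≤ C·k·|λ|^k and |ρ_k| ≤ C·k·|λ|^k for all k. For each k define a_k = −λ^k·y⁻·α·(1 + ε_k) − (s₀ + ρ_k)·λ^{2k}/d and b_k = a_k − λ^{2k}/d, and let J_k be the closed interval with endpoints a_k and b_k. Then there exists K ∈ ℕ such that for all k, k' with K ≤ k < k' the intervals J_k and J_{k'} are disjoint. (This is the statement that, when α ≠ 0, the intervals e_k² of parameter values μ for which the first return map T_k has an elliptic 2-periodic orbit do not intersect for sufficiently large and different k.) -/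
open Set

/-- Auxiliary: points of the interval `uIcc (a k) (b k)` are within an explicit distance
of the center `-lam^k * yminus * α`. -/
lemma elliptic_aux_bound
    (lam yminus d s₀ α C : ℝ)
    (hy : 0 < yminus) (hd : d ≠ 0) (hC : 0 < C)
    (ε ρ : ℕ → ℝ)
    (hε : ∀ k : ℕ, |ε k| ≤ C * k * |lam| ^ k)
    (hρ : ∀ k : ℕ, |ρ k| ≤ C * k * |lam| ^ k)
    (a b : ℕ → ℝ)
    (ha : ∀ k : ℕ, a k = -lam ^ k * yminus * α * (1 + ε k)
        - (s₀ + ρ k) * lam ^ (2 * k) / d)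
    (hb : ∀ k : ℕ, b k = a k - lam ^ (2 * k) / d)
    (k : ℕ) (x : ℝ) (hx : x ∈ Set.uIcc (a k) (b k)) :
    |x + lam ^ k * yminus * α| ≤
      |lam| ^ k * (yminus * |α|) * (C * k * |lam| ^ k)
        + (|s₀| + C * k * |lam| ^ k + 1) * |lam| ^ (2 * k) / |d| := by
  set c : ℝ := lam ^ k * yminus * α with hc
  set E : ℝ := |lam| ^ k * (yminus * |α|) * (C * k * |lam| ^ k)
        + (|s₀| + C * k * |lam| ^ k + 1) * |lam| ^ (2 * k) / |d| with hE
  have hdpos : 0 < |d| := abs_pos.mpr hd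
  have hL2 : |lam ^ (2 * k)| = |lam| ^ (2 * k) := abs_pow lam (2 * k)
  have hL2nn : (0:ℝ) ≤ |lam| ^ (2 * k) := by positivity
  have hcabs : |c| = |lam| ^ k * (yminus * |α|) := by
    rw [hc, abs_mul, abs_mul, abs_pow, abs_of_pos hy]; ring
  clear_value c E
  -- bound on the first endpoint
  have hA : |a k + c| ≤ E := by
    have h1 : a k + c = -c * ε k - (s₀ + ρ k) * lam ^ (2 * k) / d := by
      rw [ha k, hc]; ring
    have h2 : |a k + c| ≤ |c| * |ε k| + (|s₀| + |ρ k|) * |lam| ^ (2 * k) / |d| := by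
      rw [h1]
      refine (abs_sub _ _).trans ?_
      have : |(s₀ + ρ k) * lam ^ (2 * k) / d| ≤ (|s₀| + |ρ k|) * |lam| ^ (2 * k) / |d| := by
        rw [abs_div, abs_mul, hL2]
        gcongr
        exact abs_add_le _ _
      have h3 : |(-c) * ε k| = |c| * |ε k| := by rw [abs_mul, abs_neg]
      linarith [h3.le]
    refine h2.trans ?_
    rw [hE, hcabs]
    have hεk := hε k
    have hρk := hρ k
    have hcnn : (0:ℝ) ≤ |lam| ^ k * (yminus * |α|) := by positivity
    have h4 : |lam| ^ k * (yminus * |α|) * |ε k| ≤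
        |lam| ^ k * (yminus * |α|) * (C * k * |lam| ^ k) := by
      exact mul_le_mul_of_nonneg_left hεk hcnn
    have h5 : (|s₀| + |ρ k|) * |lam| ^ (2 * k) / |d| ≤
        (|s₀| + C * k * |lam| ^ k + 1) * |lam| ^ (2 * k) / |d| := by
      have hnum : (|s₀| + |ρ k|) * |lam| ^ (2 * k) ≤
          (|s₀| + C * k * |lam| ^ k + 1) * |lam| ^ (2 * k) := by
        have := hρ k
        nlinarith [hL2nn]
      exact (div_le_div_iff_of_pos_right hdpos).mpr hnum
    linarith
  -- bound on the second endpoint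
  have hB : |b k + c| ≤ E := by
    have h1 : b k + c = (a k + c) - lam ^ (2 * k) / d := by rw [hb k]; ring
    -- sharper: redo the bound
    have h2 : |b k + c| ≤ |a k + c| + |lam| ^ (2 * k) / |d| := by
      rw [h1]
      refine (abs_sub _ _).trans ?_
      rw [abs_div, hL2]
    -- we need the slack "+1" built into E; rebound |a k + c| without the +1
    have h3 : |a k + c| ≤ E - |lam| ^ (2 * k) / |d| := by
      have h1' : a k + c = -c * ε k - (s₀ + ρ k) * lam ^ (2 * k) / d := by
        rw [ha k, hc]; ring
      have h2' : |a k + c| ≤ |c| * |ε k| + (|s₀| + |ρ k|) * |lam| ^ (2 * k) / |d| := by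
        rw [h1']
        refine (abs_sub _ _).trans ?_
        have hq : |(s₀ + ρ k) * lam ^ (2 * k) / d| ≤ (|s₀| + |ρ k|) * |lam| ^ (2 * k) / |d| := by
          rw [abs_div, abs_mul, hL2]
          gcongr
          exact abs_add_le _ _
        have h3' : |(-c) * ε k| = |c| * |ε k| := by rw [abs_mul, abs_neg]
        linarith [h3'.le]
      refine h2'.trans ?_
      rw [hE, hcabs]
      have hεk := hε k
      have hρk := hρ k
      have hcnn : (0:ℝ) ≤ |lam| ^ k * (yminus * |α|) := by positivity
      have h4 : |lam| ^ k * (yminus * |α|) * |ε k| ≤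
          |lam| ^ k * (yminus * |α|) * (C * k * |lam| ^ k) :=
        mul_le_mul_of_nonneg_left hεk hcnn
      have h5 : (|s₀| + |ρ k|) * |lam| ^ (2 * k) / |d| ≤
          (|s₀| + C * k * |lam| ^ k) * |lam| ^ (2 * k) / |d| := by
        have hnum : (|s₀| + |ρ k|) * |lam| ^ (2 * k) ≤
            (|s₀| + C * k * |lam| ^ k) * |lam| ^ (2 * k) := by
          have := hρ k
          nlinarith [hL2nn]
        exact (div_le_div_iff_of_pos_right hdpos).mpr hnum
      have h6 : (|s₀| + C * k * |lam| ^ k + 1) * |lam| ^ (2 * k) / |d|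
          = (|s₀| + C * k * |lam| ^ k) * |lam| ^ (2 * k) / |d|
            + |lam| ^ (2 * k) / |d| := by ring
      linarith
    linarith
  -- conclude by convexity of the interval
  rcases Set.mem_uIcc.mp hx with ⟨h1, h2⟩ | ⟨h1, h2⟩ <;>
  · rw [abs_le] at hA hB ⊢
    constructor <;> linarith [hA.1, hA.2, hB.1, hB.2]

/-- When `α ≠ 0`, the intervals `e_k²` of parameter values `μ` for which the first return
map `T_k` has an elliptic 2-periodic orbit do not intersect for sufficiently large and
different `k`: with
`a_k = −λ^k y⁻ α (1 + ε_k) − (s₀ + ρ_k) λ^{2k}/d`, `b_k = a_k − λ^{2k}/d`,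
and `|ε_k|, |ρ_k| ≤ C k |λ|^k`, the closed intervals `J_k` with endpoints `a_k, b_k` are
pairwise disjoint for all sufficiently large indices. -/
theorem elliptic_intervals_disjoint_of_alpha_ne_zero
    (lam yminus d s₀ α C : ℝ)
    (hlam0 : 0 < |lam|) (hlam1 : |lam| < 1) (hy : 0 < yminus) (hd : d ≠ 0)
    (hα : α ≠ 0) (hC : 0 < C)
    (ε ρ : ℕ → ℝ)
    (hε : ∀ k : ℕ, |ε k| ≤ C * k * |lam| ^ k)
    (hρ : ∀ k : ℕ, |ρ k| ≤ C * k * |lam| ^ k)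
    (a b : ℕ → ℝ)
    (ha : ∀ k : ℕ, a k = -lam ^ k * yminus * α * (1 + ε k)
        - (s₀ + ρ k) * lam ^ (2 * k) / d)
    (hb : ∀ k : ℕ, b k = a k - lam ^ (2 * k) / d) :
    ∃ K : ℕ, ∀ k k' : ℕ, K ≤ k → k < k' →
      Disjoint (Set.uIcc (a k) (b k)) (Set.uIcc (a k') (b k')) := by
  have hLnn : (0:ℝ) ≤ |lam| := abs_nonneg lam
  have hM : 0 < yminus * |α| := by
    have : 0 < |α| := abs_pos.mpr hα
    positivity
  have hdpos : 0 < |d| := abs_pos.mpr hd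
  set M : ℝ := yminus * |α| with hMdef
  -- the relative error
  set η : ℕ → ℝ := fun k =>
      C * k * |lam| ^ k + (|s₀| + C * k * |lam| ^ k + 1) * |lam| ^ k / (M * |d|)
    with hηdef
  have hηnn : ∀ k, 0 ≤ η k := by
    intro k
    have h1 : (0:ℝ) ≤ C * k * |lam| ^ k := by positivity
    have h2 : (0:ℝ) ≤ (|s₀| + C * k * |lam| ^ k + 1) * |lam| ^ k / (M * |d|) := by
      rw [hMdef]; positivity
    simpa [hηdef] using add_nonneg h1 h2
  -- η tends to 0
  have hηlim : Filter.Tendsto η Filter.atTop (nhds 0) := by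
    have h1 : Filter.Tendsto (fun k : ℕ => (k : ℝ) * |lam| ^ k) Filter.atTop (nhds 0) :=
      tendsto_self_mul_const_pow_of_lt_one hLnn hlam1
    have h2 : Filter.Tendsto (fun k : ℕ => |lam| ^ k) Filter.atTop (nhds 0) :=
      tendsto_pow_atTop_nhds_zero_of_lt_one hLnn hlam1
    have hA : Filter.Tendsto (fun k : ℕ => C * k * |lam| ^ k) Filter.atTop (nhds 0) := by
      have := h1.const_mul C
      simpa [mul_assoc] using this
    have hB : Filter.Tendsto
        (fun k : ℕ => (|s₀| + C * k * |lam| ^ k + 1) * |lam| ^ k / (M * |d|))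
        Filter.atTop (nhds 0) := by
      have hsum : Filter.Tendsto (fun k : ℕ => |s₀| + C * k * |lam| ^ k + 1)
          Filter.atTop (nhds (|s₀| + 0 + 1)) :=
        ((tendsto_const_nhds.add hA).add tendsto_const_nhds)
      have := (hsum.mul h2).div_const (M * |d|)
      simpa using this
    have := hA.add hB
    simpa [hηdef] using this
  clear_value M η
  -- choose K so that η k ≤ δ for k ≥ K
  set δ : ℝ := (1 - |lam|) / 3 with hδdef
  have hδpos : 0 < δ := by rw [hδdef]; linarith
  have hδlt : |lam| + 2 * δ < 1 := by rw [hδdef]; linarith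
  clear_value δ
  have hev : ∀ᶠ k in Filter.atTop, η k < δ := by
    have := hηlim (Iio_mem_nhds hδpos)
    simpa [Set.mem_Iio] using this
  obtain ⟨K, hK⟩ := Filter.eventually_atTop.mp hev
  refine ⟨K, fun k k' hkK hkk' => ?_⟩
  rw [Set.disjoint_left]
  rintro x hxk hxk'
  -- bounds from membership in J_k and J_{k'}
  have key : ∀ j : ℕ, ∀ y : ℝ, y ∈ Set.uIcc (a j) (b j) →
      |y + lam ^ j * yminus * α| ≤ |lam| ^ j * M * η j := by
    intro j y hyj
    have h := elliptic_aux_bound lam yminus d s₀ α C hy hd hC ε ρ hε hρ a b ha hb j y hyj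
    have heq : |lam| ^ j * M * η j =
        |lam| ^ j * M * (C * j * |lam| ^ j)
          + (|s₀| + C * j * |lam| ^ j + 1) * |lam| ^ (2 * j) / |d| := by
      rw [hηdef]
      have hLp : |lam| ^ (2 * j) = |lam| ^ j * |lam| ^ j := by rw [two_mul, pow_add]
      rw [hLp]
      field_simp
    rw [heq, hMdef]
    exact h
  have hcabs : ∀ j : ℕ, |lam ^ j * yminus * α| = |lam| ^ j * M := by
    intro j
    rw [abs_mul, abs_mul, abs_pow, abs_of_pos hy, hMdef, mul_assoc]
  -- lower bound for |x| from J_k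
  have hk1 : |lam| ^ k * M - |lam| ^ k * M * η k ≤ |x| := by
    have h := key k x hxk
    have h2 := abs_sub_abs_le_abs_sub (lam ^ k * yminus * α) (-(x))
    have h3 : |lam ^ k * yminus * α - -x| = |x + lam ^ k * yminus * α| := by
      rw [sub_neg_eq_add, add_comm]
    rw [h3, hcabs k, abs_neg] at h2
    linarith
  -- upper bound for |x| from J_{k'}
  have hk2 : |x| ≤ |lam| ^ k' * M + |lam| ^ k' * M * η k' := by
    have h := key k' x hxk'
    have h2 : |x| ≤ |x + lam ^ k' * yminus * α| + |lam ^ k' * yminus * α| := by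
      have := abs_sub (x + lam ^ k' * yminus * α) (lam ^ k' * yminus * α)
      simpa using this
    rw [hcabs k'] at h2
    linarith
  -- both η small
  have hηk : η k < δ := hK k hkK
  have hηk' : η k' < δ := hK k' (le_of_lt (lt_of_le_of_lt hkK hkk'))
  have hLkpos : (0:ℝ) < |lam| ^ k := pow_pos hlam0 k
  have hLknn : (0:ℝ) ≤ |lam| ^ k * M := le_of_lt (mul_pos hLkpos hM)
  -- |lam| ^ k' ≤ |lam| ^ (k+1)
  have hpow : |lam| ^ k' ≤ |lam| ^ (k + 1) :=
    pow_le_pow_of_le_one hLnn hlam1.le hkk'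
  have hLk'nn : (0:ℝ) ≤ |lam| ^ k' * M := le_of_lt (mul_pos (pow_pos hlam0 k') hM)
  have c1 : |lam| ^ k * M * (1 - δ) ≤ |x| := by
    have : |lam| ^ k * M * η k ≤ |lam| ^ k * M * δ :=
      mul_le_mul_of_nonneg_left hηk.le hLknn
    nlinarith
  have c2 : |x| ≤ |lam| ^ (k + 1) * M * (1 + δ) := by
    have h1 : |lam| ^ k' * M * η k' ≤ |lam| ^ k' * M * δ :=
      mul_le_mul_of_nonneg_left hηk'.le hLk'nn
    have h2 : |lam| ^ k' * M * (1 + δ) ≤ |lam| ^ (k + 1) * M * (1 + δ) := by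
      have hpos : (0:ℝ) ≤ M * (1 + δ) := by nlinarith
      nlinarith
    nlinarith
  -- contradiction: (1 - δ) ≤ |lam| * (1 + δ) but |lam| + 2δ < 1
  have hc : |lam| ^ k * (M * (1 - δ)) ≤ |lam| ^ k * (|lam| * (M * (1 + δ))) := by
    have h := c1.trans c2
    rw [pow_succ] at h
    nlinarith [h]
  have hdiv : M * (1 - δ) ≤ |lam| * (M * (1 + δ)) := le_of_mul_le_mul_left hc hLkpos
  have hδL : |lam| * δ ≤ δ := mul_le_of_le_one_left hδpos.le hlam1.le
  have h1 : |lam| * (M * (1 + δ)) = M * (|lam| + |lam| * δ) := by ring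
  have h2 : M * (|lam| + |lam| * δ) ≤ M * (|lam| + δ) :=
    mul_le_mul_of_nonneg_left (by linarith) hM.le
  have h3 : M * (1 - δ) ≤ M * (|lam| + δ) := by
    rw [h1] at hdiv; linarith
  have h4 : 1 - δ ≤ |lam| + δ := le_of_mul_le_mul_left h3 hM
  linarith
end
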